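/- Let f = −((1/2) f_1 + (1/(K+2)) f_2) + K/2 on V_K. Then the vector field A − ∇f is divergence-free: for every a ∈ V_K, Σ_{(a,b) ∈ E_K} A(a,b) = Σ_{(a,b) ∈ E_K} (f(b) − f(a)), where the sums run over all edges of E_K leaving a, loops included. -/

import Mathlib

open Finset MeasureTheory Filter

namespace CRW

/-- The vertex set `V_K = {-1,1}^K ⊆ ℤ^K`. -/
def V (K : ℕ) : Finset (Fin K → ℤ) :=
  Fintype.piFinset fun _ => ({-1, 1} : Finset ℤ)

/-- The nonzero entries of `b - a`, read in order of increasing index, alternate in sign,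
the first nonzero entry being negative (the `c`-th nonzero entry, `0`-indexed, equals
`2 * (-1)^(c+1)`; in particular all entries lie in `{-2,0,2}`). -/
def AltNeg (K : ℕ) (a b : Fin K → ℤ) : Prop :=
  ∀ i : Fin K, b i - a i ≠ 0 →
    b i - a i =
      2 * (-1 : ℤ) ^ (((Finset.univ.filter fun j : Fin K => j < i ∧ b j - a j ≠ 0)).card + 1)

/-- Same with the first nonzero entry positive. -/
def AltPos (K : ℕ) (a b : Fin K → ℤ) : Prop :=
  ∀ i : Fin K, b i - a i ≠ 0 →
    b i - a i =
      2 * (-1 : ℤ) ^ ((Finset.univ.filter fun j : Fin K => j < i ∧ b j - a j ≠ 0)).card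

instance (K : ℕ) (a b : Fin K → ℤ) : Decidable (AltNeg K a b) := by
  unfold AltNeg; infer_instance

instance (K : ℕ) (a b : Fin K → ℤ) : Decidable (AltPos K a b) := by
  unfold AltPos; infer_instance

/-- The set `E_K^+` of positive edges: couples `(a,b)` of vertices with `a ≠ b` whose
difference has nonzero entries of alternating signs, the first one negative; together
with one (positive) loop `(a,a)` at every vertex. -/
def Eplus (K : ℕ) : Finset ((Fin K → ℤ) × (Fin K → ℤ)) :=
  ((V K) ×ˢ (V K)).filter fun p => p.1 = p.2 ∨ AltNeg K p.1 p.2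

/-- The set `E_K^-` of negative edges, with one (negative) loop at every vertex. -/
def Eminus (K : ℕ) : Finset ((Fin K → ℤ) × (Fin K → ℤ)) :=
  ((V K) ×ˢ (V K)).filter fun p => p.1 = p.2 ∨ AltPos K p.1 p.2

/-- Type of signed edges: the Boolean records whether the edge is positive. -/
abbrev Edge (K : ℕ) := Bool × ((Fin K → ℤ) × (Fin K → ℤ))

/-- `E_K = E_K^+ ⊔ E_K^-` as a disjoint union (positive edges tagged `true`). -/
def EK (K : ℕ) : Finset (Edge K) :=
  (Eplus K).image (fun p => (true, p)) ∪ (Eminus K).image (fun p => (false, p))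

/-- The vector field `A`, equal to `+1` on `E_K^+` and `-1` on `E_K^-`. -/
noncomputable def A (K : ℕ) : Edge K → ℝ := fun e => if e.1 then 1 else -1

/-- `α_k(a)`: the number of `b` with `(a,b) ∈ E_K^+` differing from `a` in exactly `k`
coordinates. -/
def alphaK (K k : ℕ) (a : Fin K → ℤ) : ℕ :=
  ((V K).filter fun b =>
    (a, b) ∈ Eplus K ∧ (Finset.univ.filter fun i : Fin K => b i ≠ a i).card = k).card

/-- `ᾱ_k(a)`: the number of `b` with `(a,b) ∈ E_K^-` differing from `a` in exactly `k`
coordinates. -/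
def abarK (K k : ℕ) (a : Fin K → ℤ) : ℕ :=
  ((V K).filter fun b =>
    (a, b) ∈ Eminus K ∧ (Finset.univ.filter fun i : Fin K => b i ≠ a i).card = k).card

/-- `α_ev(a) = Σ_{k even} α_k(a)`. -/
def alphaEv (K : ℕ) (a : Fin K → ℤ) : ℕ :=
  ∑ k ∈ (Finset.range (K + 1)).filter (fun k => Even k), alphaK K k a

/-- `α_od(a) = Σ_{k odd} α_k(a)`. -/
def alphaOd (K : ℕ) (a : Fin K → ℤ) : ℕ :=
  ∑ k ∈ (Finset.range (K + 1)).filter (fun k => Odd k), alphaK K k a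

/-- `ᾱ_ev(a) = Σ_{k even} ᾱ_k(a)`. -/
def abarEv (K : ℕ) (a : Fin K → ℤ) : ℕ :=
  ∑ k ∈ (Finset.range (K + 1)).filter (fun k => Even k), abarK K k a

/-- `ᾱ_od(a) = Σ_{k odd} ᾱ_k(a)`. -/
def abarOd (K : ℕ) (a : Fin K → ℤ) : ℕ :=
  ∑ k ∈ (Finset.range (K + 1)).filter (fun k => Odd k), abarK K k a

/-- `ᾱ(a) = Σ_{k=0}^K ᾱ_k(a)`. -/
def abarTot (K : ℕ) (a : Fin K → ℤ) : ℕ := ∑ k ∈ Finset.range (K + 1), abarK K k a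

/-- `f_1(a) = Σ_i a_i`. -/
def f1 (K : ℕ) (a : Fin K → ℤ) : ℤ := ∑ i : Fin K, a i

/-- `f_2(a) = α_2(a) - ᾱ_2(a)`. -/
def f2 (K : ℕ) (a : Fin K → ℤ) : ℤ := (alphaK K 2 a : ℤ) - (abarK K 2 a : ℤ)

/-- `φ(a) = Σ_{(a,b) ∈ E_K^+} (f_2(b) - f_2(a))` (loops included; they contribute `0`). -/
def phi (K : ℕ) (a : Fin K → ℤ) : ℤ :=
  ∑ p ∈ (Eplus K).filter (fun p => p.1 = a), (f2 K p.2 - f2 K p.1)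

/-- `φ̄(a) = Σ_{(a,b) ∈ E_K^-} (f_2(b) - f_2(a))`. -/
def phibar (K : ℕ) (a : Fin K → ℤ) : ℤ :=
  ∑ p ∈ (Eminus K).filter (fun p => p.1 = a), (f2 K p.2 - f2 K p.1)

/-- The gradient vector field of a function `f` on the vertices:
`∇f(a,b) = f(b) - f(a)` (it vanishes on loops). -/
noncomputable def gradE (K : ℕ) (f : (Fin K → ℤ) → ℝ) : Edge K → ℝ := fun e => f e.2.2 - f e.2.1

/-- Divergence of a vector field at a vertex: the sum of its values over all edges of
`E_K` leaving that vertex, loops included. -/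
noncomputable def divE (K : ℕ) (S : Edge K → ℝ) (a : Fin K → ℤ) : ℝ :=
  ∑ e ∈ (EK K).filter (fun e => e.2.1 = a), S e

/-- Scalar product `⟨S,S'⟩ = (1/D_K) Σ_{e ∈ E_K} S(e) S'(e)` with `D_K = Card E_K`. -/
noncomputable def innerE (K : ℕ) (S S' : Edge K → ℝ) : ℝ :=
  (∑ e ∈ EK K, S e * S' e) / ((EK K).card : ℝ)

/-- A vector field on `G_K`: antisymmetric on non-loop edges (reversing a non-loop edge
of `E_K` yields again an edge of `E_K`, with the opposite sign), with opposite values on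
the two loops at each vertex. -/
def IsVectorField (K : ℕ) (S : Edge K → ℝ) : Prop :=
  (∀ e ∈ EK K, ∀ e' ∈ EK K, e.2.1 ≠ e.2.2 → e'.2.1 = e.2.2 → e'.2.2 = e.2.1 →
    S e = - S e') ∧
  (∀ a : Fin K → ℤ, (true, (a, a)) ∈ EK K → S (true, (a, a)) = - S (false, (a, a)))

/-- The state space `𝒮_K` of `K`-step walks in `ℤ`. -/
def SK (K : ℕ) : Set (Fin (K + 1) → ℤ) :=
  {z | ∀ i : Fin K, |z i.succ - z i.castSucc| = 1}

/-- `w` is a possible next position for the constrained walk at `z`. -/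
def Adjacent (K : ℕ) (z w : Fin (K + 1) → ℤ) : Prop :=
  w ∈ SK K ∧ ∀ i : Fin (K + 1), |w i - z i| = 1

/-- The shape map `δ(z) = (z⁽²⁾ - z⁽¹⁾, …, z⁽ᴷ⁺¹⁾ - z⁽ᴷ⁾)`. -/
def deltaS (K : ℕ) (z : Fin (K + 1) → ℤ) : Fin K → ℤ :=
  fun i => z i.succ - z i.castSucc

end CRW

namespace CRWAux


variable {K : ℕ}

/-- rank of `i` in `F`: number of elements of `F` below `i`. -/
def rk (F : Finset (Fin K)) (i : Fin K) : ℕ := (F.filter (· < i)).card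

/-- alternating index sum `Σ_{i∈F} (-1)^{rk F i} i`. -/
def sg (F : Finset (Fin K)) : ℤ := ∑ i ∈ F, (-1 : ℤ) ^ (rk F i) * (i : ℤ)

def eI (m : ℕ) : ℤ := if Odd m then 1 else 0

/-- `a` alternates on `F` with first letter `s`. -/
def altC (a : Fin K → ℤ) (s : ℤ) (F : Finset (Fin K)) : Prop :=
  ∀ i ∈ F, a i = s * (-1) ^ (rk F i)

instance (a : Fin K → ℤ) (s : ℤ) (F : Finset (Fin K)) : Decidable (altC a s F) := by
  unfold altC; infer_instance

def cO (a : Fin K → ℤ) (s : ℤ) : ℤ :=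
  ∑ F : Finset (Fin K), if altC a s F ∧ Odd F.card then 1 else 0

def cE (a : Fin K → ℤ) (s : ℤ) : ℤ :=
  ∑ F : Finset (Fin K), if altC a s F ∧ Even F.card then 1 else 0

def LL (a : Fin K → ℤ) (s : ℤ) : ℤ :=
  ∑ F : Finset (Fin K), if altC a s F then sg F else 0

lemma sum_rk (F : Finset (Fin K)) (g : ℕ → ℤ) :
    ∑ i ∈ F, g (rk F i) = ∑ t ∈ Finset.range F.card, g t := by
  induction F using Finset.strongInduction with
  | _ F ih =>
    rcases F.eq_empty_or_nonempty with rfl | hne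
    · simp
    · have hM : F.max' hne ∈ F := F.max'_mem hne
      set M := F.max' hne with hMdef
      have h1 : F = insert M (F.erase M) := (Finset.insert_erase hM).symm
      have hMn : M ∉ F.erase M := Finset.notMem_erase _ _
      have hrk : ∀ i ∈ F.erase M, rk F i = rk (F.erase M) i := by
        intro i hi
        unfold rk
        rw [Finset.filter_erase]
        rw [Finset.erase_eq_of_notMem]
        simp only [Finset.mem_filter]
        intro ⟨_, hlt⟩
        exact absurd (F.le_max' i (Finset.mem_of_mem_erase hi)) (not_le.mpr hlt)
      have hrkM : rk F M = F.card - 1 := by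
        unfold rk
        have : F.filter (· < M) = F.erase M := by
          ext j
          simp only [Finset.mem_filter, Finset.mem_erase]
          constructor
          · rintro ⟨hj, hlt⟩; exact ⟨ne_of_lt hlt, hj⟩
          · rintro ⟨hne', hj⟩
            exact ⟨hj, lt_of_le_of_ne (F.le_max' j hj) hne'⟩
        rw [this, Finset.card_erase_of_mem hM]
      have hcard : (F.erase M).card = F.card - 1 := Finset.card_erase_of_mem hM
      have hpos : 0 < F.card := Finset.card_pos.mpr hne
      calc ∑ i ∈ F, g (rk F i)
          = g (rk F M) + ∑ i ∈ F.erase M, g (rk F i) := by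
            rw [h1, Finset.sum_insert hMn]; rw [← h1]
        _ = g (F.card - 1) + ∑ i ∈ F.erase M, g (rk (F.erase M) i) := by
            rw [hrkM]; congr 1; exact Finset.sum_congr rfl fun i hi => by rw [hrk i hi]
        _ = g (F.card - 1) + ∑ t ∈ Finset.range (F.card - 1), g t := by
            rw [ih (F.erase M) (Finset.erase_ssubset hM), hcard]
        _ = ∑ t ∈ Finset.range F.card, g t := by
            conv_rhs => rw [show F.card = (F.card - 1) + 1 by omega, Finset.sum_range_succ]
            ring

lemma sum_neg_one (m : ℕ) : ∑ t ∈ Finset.range m, (-1 : ℤ) ^ t = eI m := by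
  induction m with
  | zero => simp [eI]
  | succ k ih =>
    rw [Finset.sum_range_succ, ih]
    rcases Nat.even_or_odd k with h | h
    · simp [eI, h.neg_one_pow, Nat.odd_add_one, h, Nat.not_odd_iff_even.mpr h]
    · simp [eI, h.neg_one_pow, h, Nat.odd_add_one, Nat.not_even_iff_odd.mpr h]

lemma sum_rk_neg_one (F : Finset (Fin K)) : ∑ i ∈ F, (-1 : ℤ) ^ (rk F i) = eI F.card := by
  rw [sum_rk F (fun t => (-1 : ℤ) ^ t)]; exact sum_neg_one _


/-! ### Prepending a coordinate -/

def emb (K : ℕ) : Fin K ↪ Fin (K + 1) := ⟨Fin.succ, Fin.succ_injective K⟩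

lemma zero_not_mem_map (F : Finset (Fin K)) : (0 : Fin (K + 1)) ∉ F.map (emb K) := by
  simp only [Finset.mem_map, emb, Function.Embedding.coeFn_mk]
  rintro ⟨j, _, hj⟩
  exact Fin.succ_ne_zero j hj

lemma rk_map (F : Finset (Fin K)) (i : Fin K) :
    rk (F.map (emb K)) i.succ = rk F i := by
  unfold rk
  rw [Finset.filter_map]
  rw [Finset.card_map]
  congr 1
  apply Finset.filter_congr
  intro j _
  simp [emb, Fin.succ_lt_succ_iff]

lemma rk_insert_succ (F : Finset (Fin K)) (i : Fin K) :
    rk (insert 0 (F.map (emb K))) i.succ = rk F i + 1 := by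
  unfold rk
  rw [Finset.filter_insert, if_pos (Fin.succ_pos i)]
  rw [Finset.card_insert_of_notMem (fun h => zero_not_mem_map F (Finset.mem_of_mem_filter _ h))]
  have h2 : #(Finset.filter (fun x => x < i.succ) (F.map (emb K))) = rk (F.map (emb K)) i.succ := rfl
  rw [h2, rk_map]
  rfl

lemma rk_insert_zero (F : Finset (Fin K)) :
    rk (insert 0 (F.map (emb K))) (0 : Fin (K + 1)) = 0 := by
  unfold rk
  rw [Finset.filter_eq_empty_iff.mpr (fun j _ => by exact Fin.not_lt_zero j)]
  rfl

lemma altC_map (a : Fin (K + 1) → ℤ) (s : ℤ) (F : Finset (Fin K)) :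
    altC a s (F.map (emb K)) ↔ altC (a ∘ Fin.succ) s F := by
  unfold altC
  rw [Finset.forall_mem_map]
  apply forall_congr'
  intro j
  apply forall_congr'
  intro hj
  have : (emb K) j = j.succ := rfl
  rw [this, rk_map]
  rfl

lemma altC_insert (a : Fin (K + 1) → ℤ) (s : ℤ) (F : Finset (Fin K)) :
    altC a s (insert 0 (F.map (emb K))) ↔ a 0 = s ∧ altC (a ∘ Fin.succ) (-s) F := by
  unfold altC
  rw [Finset.forall_mem_insert, Finset.forall_mem_map]
  constructor
  · rintro ⟨h0, h1⟩
    refine ⟨by simpa [rk_insert_zero] using h0, fun j hj => ?_⟩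
    have h2 := h1 j hj
    have he : (emb K) j = j.succ := rfl
    rw [he, rk_insert_succ] at h2
    show a j.succ = -s * (-1) ^ rk F j
    rw [h2]
    ring
  · rintro ⟨h0, h1⟩
    refine ⟨by simpa [rk_insert_zero] using h0, fun j hj => ?_⟩
    have he : (emb K) j = j.succ := rfl
    have h2 := h1 j hj
    simp only [Function.comp_apply] at h2
    rw [he, rk_insert_succ, h2]
    ring

lemma sg_map (F : Finset (Fin K)) : sg (F.map (emb K)) = sg F + eI F.card := by
  unfold sg
  rw [Finset.sum_map]
  have : ∀ j ∈ F, (-1 : ℤ) ^ (rk (F.map (emb K)) ((emb K) j)) * (((emb K) j : Fin (K+1)) : ℤ)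
      = (-1 : ℤ) ^ (rk F j) * (j : ℤ) + (-1 : ℤ) ^ (rk F j) := by
    intro j _
    have he : (emb K) j = j.succ := rfl
    rw [he, rk_map]
    have : ((j.succ : Fin (K + 1)) : ℤ) = (j : ℤ) + 1 := by
      simp [Fin.val_succ]
    rw [this]
    ring
  rw [Finset.sum_congr rfl this, Finset.sum_add_distrib, sum_rk_neg_one]

lemma sg_insert (F : Finset (Fin K)) :
    sg (insert 0 (F.map (emb K))) = -sg F - eI F.card := by
  unfold sg
  rw [Finset.sum_insert (zero_not_mem_map F), Finset.sum_map]
  have h0 : ((0 : Fin (K + 1)) : ℤ) = 0 := rfl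
  have : ∀ j ∈ F, (-1 : ℤ) ^ (rk (insert 0 (F.map (emb K))) ((emb K) j)) * (((emb K) j : Fin (K+1)) : ℤ)
      = -((-1 : ℤ) ^ (rk F j) * (j : ℤ) + (-1 : ℤ) ^ (rk F j)) := by
    intro j _
    have he : (emb K) j = j.succ := rfl
    rw [he, rk_insert_succ]
    have : ((j.succ : Fin (K + 1)) : ℤ) = (j : ℤ) + 1 := by simp [Fin.val_succ]
    rw [this]
    ring
  rw [Finset.sum_congr rfl this, h0, Finset.sum_neg_distrib, Finset.sum_add_distrib, sum_rk_neg_one]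
  ring

lemma card_map_emb (F : Finset (Fin K)) : (F.map (emb K)).card = F.card := Finset.card_map _

lemma card_insert_emb (F : Finset (Fin K)) :
    (insert 0 (F.map (emb K))).card = F.card + 1 := by
  rw [Finset.card_insert_of_notMem (zero_not_mem_map F), Finset.card_map]

lemma map_filter_succ (F' : Finset (Fin (K + 1))) (h : (0 : Fin (K + 1)) ∉ F') :
    (Finset.univ.filter (fun j : Fin K => j.succ ∈ F')).map (emb K) = F' := by
  ext i
  simp only [Finset.mem_map, Finset.mem_filter, Finset.mem_univ, true_and, emb,
    Function.Embedding.coeFn_mk]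
  constructor
  · rintro ⟨j, hj, rfl⟩; exact hj
  · intro hi
    rcases Fin.eq_zero_or_eq_succ i with rfl | ⟨j, rfl⟩
    · exact absurd hi h
    · exact ⟨j, hi, rfl⟩

lemma insert_map_filter_succ (F' : Finset (Fin (K + 1))) (h : (0 : Fin (K + 1)) ∈ F') :
    insert 0 ((Finset.univ.filter (fun j : Fin K => j.succ ∈ F')).map (emb K)) = F' := by
  ext i
  simp only [Finset.mem_insert, Finset.mem_map, Finset.mem_filter, Finset.mem_univ, true_and, emb,
    Function.Embedding.coeFn_mk]
  constructor
  · rintro (rfl | ⟨j, hj, rfl⟩)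
    · exact h
    · exact hj
  · intro hi
    rcases Fin.eq_zero_or_eq_succ i with rfl | ⟨j, rfl⟩
    · exact Or.inl rfl
    · exact Or.inr ⟨j, hi, rfl⟩

lemma filter_succ_map (F : Finset (Fin K)) :
    Finset.univ.filter (fun j : Fin K => j.succ ∈ F.map (emb K)) = F := by
  ext j
  simp only [Finset.mem_filter, Finset.mem_univ, true_and, Finset.mem_map, emb,
    Function.Embedding.coeFn_mk]
  constructor
  · rintro ⟨x, hx, hxe⟩
    rwa [Fin.succ_injective K hxe] at hx
  · intro hj; exact ⟨j, hj, rfl⟩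

lemma filter_succ_insert (F : Finset (Fin K)) :
    Finset.univ.filter (fun j : Fin K => j.succ ∈ insert 0 (F.map (emb K))) = F := by
  ext j
  simp only [Finset.mem_filter, Finset.mem_univ, true_and, Finset.mem_insert, Finset.mem_map,
    emb, Function.Embedding.coeFn_mk]
  constructor
  · rintro (h | ⟨x, hx, hxe⟩)
    · exact absurd h (Fin.succ_ne_zero j)
    · rwa [Fin.succ_injective K hxe] at hx
  · intro hj; exact Or.inr ⟨j, hj, rfl⟩

/-- Splitting a sum over all subsets of `Fin (K+1)` according to membership of `0`. -/
lemma sum_split (g : Finset (Fin (K + 1)) → ℤ) :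
    ∑ F : Finset (Fin (K + 1)), g F
      = (∑ F : Finset (Fin K), g (F.map (emb K)))
        + ∑ F : Finset (Fin K), g (insert 0 (F.map (emb K))) := by
  have h1 : ∑ F : Finset (Fin K), g (F.map (emb K))
      = ∑ F' ∈ Finset.univ.filter (fun F' : Finset (Fin (K + 1)) => (0 : Fin (K+1)) ∉ F'), g F' := by
    apply Finset.sum_nbij' (i := fun F => F.map (emb K))
      (j := fun F' => Finset.univ.filter (fun j : Fin K => j.succ ∈ F'))
    · intro F _
      simp only [Finset.mem_filter, Finset.mem_univ, true_and]
      exact zero_not_mem_map F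
    · intro F' _; exact Finset.mem_univ _
    · intro F _; exact filter_succ_map F
    · intro F' hF'
      simp only [Finset.mem_filter, Finset.mem_univ, true_and] at hF'
      exact map_filter_succ F' hF'
    · intro F _; rfl
  have h2 : ∑ F : Finset (Fin K), g (insert 0 (F.map (emb K)))
      = ∑ F' ∈ Finset.univ.filter (fun F' : Finset (Fin (K + 1)) => (0 : Fin (K+1)) ∈ F'), g F' := by
    apply Finset.sum_nbij' (i := fun F => insert 0 (F.map (emb K)))
      (j := fun F' => Finset.univ.filter (fun j : Fin K => j.succ ∈ F'))
    · intro F _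
      simp only [Finset.mem_filter, Finset.mem_univ, true_and]
      exact Finset.mem_insert_self _ _
    · intro F' _; exact Finset.mem_univ _
    · intro F _; exact filter_succ_insert F
    · intro F' hF'
      simp only [Finset.mem_filter, Finset.mem_univ, true_and] at hF'
      exact insert_map_filter_succ F' hF'
    · intro F _; rfl
  rw [h1, h2]
  have h3 := Finset.sum_filter_add_sum_filter_not Finset.univ
    (fun F' : Finset (Fin (K + 1)) => (0 : Fin (K+1)) ∈ F') g
  linarith [h3]


lemma cO_eq_sum_eI (a : Fin K → ℤ) (s : ℤ) :
    ∑ F : Finset (Fin K), (if altC a s F then eI F.card else 0) = cO a s := by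
  unfold cO
  apply Finset.sum_congr rfl
  intro F _
  by_cases h : altC a s F
  · by_cases h2 : Odd F.card <;> simp [h, h2, eI]
  · simp [h]

lemma cO_step (a : Fin (K + 1) → ℤ) (s : ℤ) :
    cO a s = cO (a ∘ Fin.succ) s + (if a 0 = s then cE (a ∘ Fin.succ) (-s) else 0) := by
  unfold cO cE
  rw [sum_split]
  congr 1
  · apply Finset.sum_congr rfl
    intro F _
    simp only [altC_map, card_map_emb]
  · by_cases h : a 0 = s
    · rw [if_pos h]
      apply Finset.sum_congr rfl
      intro F _
      simp [altC_insert, card_insert_emb, Nat.odd_add_one, h, and_assoc]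
    · rw [if_neg h]
      apply Finset.sum_eq_zero
      intro F _
      rw [if_neg]
      rw [altC_insert]
      rintro ⟨⟨h0, _⟩, _⟩
      exact h h0

lemma cE_step (a : Fin (K + 1) → ℤ) (s : ℤ) :
    cE a s = cE (a ∘ Fin.succ) s + (if a 0 = s then cO (a ∘ Fin.succ) (-s) else 0) := by
  unfold cO cE
  rw [sum_split]
  congr 1
  · apply Finset.sum_congr rfl
    intro F _
    simp only [altC_map, card_map_emb]
  · by_cases h : a 0 = s
    · rw [if_pos h]
      apply Finset.sum_congr rfl
      intro F _
      simp [altC_insert, card_insert_emb, Nat.even_add_one, Nat.not_even_iff_odd, h, and_assoc]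
    · rw [if_neg h]
      apply Finset.sum_eq_zero
      intro F _
      rw [if_neg]
      rw [altC_insert]
      rintro ⟨⟨h0, _⟩, _⟩
      exact h h0

lemma LL_step (a : Fin (K + 1) → ℤ) (s : ℤ) :
    LL a s = LL (a ∘ Fin.succ) s + cO (a ∘ Fin.succ) s
      + (if a 0 = s then -(LL (a ∘ Fin.succ) (-s)) - cO (a ∘ Fin.succ) (-s) else 0) := by
  unfold LL
  rw [sum_split]
  congr 1
  · have : ∀ F : Finset (Fin K),
        (if altC a s (F.map (emb K)) then sg (F.map (emb K)) else 0)
        = (if altC (a ∘ Fin.succ) s F then sg F else 0)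
          + (if altC (a ∘ Fin.succ) s F then eI F.card else 0) := by
      intro F
      rw [sg_map]
      by_cases h : altC a s (F.map (emb K))
      · rw [if_pos h, if_pos ((altC_map a s F).mp h), if_pos ((altC_map a s F).mp h)]
      · rw [if_neg h, if_neg (fun hc => h ((altC_map a s F).mpr hc)),
          if_neg (fun hc => h ((altC_map a s F).mpr hc))]
        ring
    rw [Finset.sum_congr rfl (fun F _ => this F), Finset.sum_add_distrib, cO_eq_sum_eI]
  · by_cases h : a 0 = s
    · rw [if_pos h]
      have : ∀ F : Finset (Fin K),
          (if altC a s (insert 0 (F.map (emb K))) then sg (insert 0 (F.map (emb K))) else 0)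
          = (if altC (a ∘ Fin.succ) (-s) F then -(sg F) else 0)
            + (if altC (a ∘ Fin.succ) (-s) F then -(eI F.card) else 0) := by
        intro F
        rw [sg_insert]
        by_cases h2 : altC (a ∘ Fin.succ) (-s) F
        · rw [if_pos ((altC_insert a s F).mpr ⟨h, h2⟩), if_pos h2, if_pos h2]
          ring
        · rw [if_neg (fun hc => h2 ((altC_insert a s F).mp hc).2), if_neg h2, if_neg h2]
          ring
      rw [Finset.sum_congr rfl (fun F _ => this F), Finset.sum_add_distrib]
      have e1' : (∑ F : Finset (Fin K), if altC (a ∘ Fin.succ) (-s) F then -(sg F) else 0)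
          = -(LL (a ∘ Fin.succ) (-s)) := by
        unfold LL
        rw [← Finset.sum_neg_distrib]
        apply Finset.sum_congr rfl
        intro F _
        split_ifs <;> simp
      have e2' : (∑ F : Finset (Fin K), if altC (a ∘ Fin.succ) (-s) F then -(eI F.card) else 0)
          = -(cO (a ∘ Fin.succ) (-s)) := by
        rw [← cO_eq_sum_eI, ← Finset.sum_neg_distrib]
        apply Finset.sum_congr rfl
        intro F _
        split_ifs <;> simp
      rw [e1', e2']
      unfold LL
      ring
    · rw [if_neg h]
      apply Finset.sum_eq_zero
      intro F _
      rw [if_neg]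
      rw [altC_insert]
      rintro ⟨h0, _⟩
      exact h h0

/-- The key invariant, proved by induction on `K`. -/
lemma R2 : ∀ (K : ℕ) (a : Fin K → ℤ), (∀ i, a i = 1 ∨ a i = -1) → ∀ s : ℤ, (s = 1 ∨ s = -1) →
    2 * LL a s = (K : ℤ) * cO a s - ((K : ℤ) + 1) * cE a s + cO a (-s) + cE a (-s) := by
  intro K
  induction K with
  | zero =>
    intro a _ s _
    have hu : (Finset.univ : Finset (Finset (Fin 0))) = {∅} := by
      ext F
      constructor
      · intro _
        rw [Finset.mem_singleton]
        exact Finset.eq_empty_of_isEmpty F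
      · intro _
        exact Finset.mem_univ F
    unfold LL cO cE
    have halt : ∀ t : ℤ, altC a t ∅ := by intro t i hi; exact absurd hi (Finset.notMem_empty i)
    have h0 : ¬ Odd (0 : ℕ) := by decide
    have h0' : Even (0 : ℕ) := by decide
    simp only [hu, Finset.sum_singleton, Finset.card_empty]
    simp [halt, sg, h0, h0']
  | succ n ih =>
    intro a ha s hs
    have hb' : ∀ i, (a ∘ Fin.succ) i = 1 ∨ (a ∘ Fin.succ) i = -1 := fun i => ha i.succ
    have hs' : -s = 1 ∨ -s = -1 := by
      rcases hs with rfl | rfl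
      · exact Or.inr (by norm_num)
      · exact Or.inl (by norm_num)
    have e1 := cO_step a s
    have e2 := cE_step a s
    have e3 := LL_step a s
    have e4 := cO_step a (-s)
    have e5 := cE_step a (-s)
    have e6 := LL_step a (-s)
    rw [neg_neg] at e4 e5 e6
    have i1 := ih (a ∘ Fin.succ) hb' s hs
    have i2 := ih (a ∘ Fin.succ) hb' (-s) hs'
    rw [neg_neg] at i2
    by_cases h : a 0 = s
    · have h2 : ¬ a 0 = -s := by
        intro hc
        rcases hs with rfl | rfl <;> omega
      rw [if_pos h] at e1 e2 e3
      rw [if_neg h2] at e4 e5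
      push_cast
      rw [e1, e2, e3, e4, e5]
      push_cast at i1 i2
      linarith
    · have h2 : a 0 = -s := by
        rcases ha 0 with h0 | h0 <;> rcases hs with rfl | rfl <;> omega
      rw [if_neg h] at e1 e2 e3
      rw [if_pos h2] at e4 e5
      push_cast
      rw [e1, e2, e3, e4, e5]
      push_cast at i1 i2
      linarith

lemma key_identity (K : ℕ) (a : Fin K → ℤ) (ha : ∀ i, a i = 1 ∨ a i = -1) :
    2 * (LL a 1 - LL a (-1))
      = ((K : ℤ) - 1) * (cO a 1 - cO a (-1)) - ((K : ℤ) + 2) * (cE a 1 - cE a (-1)) := by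
  have r1 := R2 K a ha 1 (Or.inl rfl)
  have r2 := R2 K a ha (-1) (Or.inr rfl)
  rw [neg_neg] at r2
  linarith

open CRW

section Bridge

variable {K : ℕ}

def flp (a : Fin K → ℤ) (F : Finset (Fin K)) : Fin K → ℤ :=
  fun i => if i ∈ F then -a i else a i

lemma mem_V_iff (a : Fin K → ℤ) : a ∈ V K ↔ ∀ i, a i = -1 ∨ a i = 1 := by
  simp [V, Fintype.mem_piFinset]

lemma pm_of_mem {a : Fin K → ℤ} (ha : a ∈ V K) : ∀ i, a i = 1 ∨ a i = -1 := by
  intro i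
  rcases (mem_V_iff a).mp ha i with h | h
  · exact Or.inr h
  · exact Or.inl h

lemma nz_of_mem {a : Fin K → ℤ} (ha : a ∈ V K) : ∀ i, a i ≠ 0 := by
  intro i
  rcases pm_of_mem ha i with h | h <;> simp [h]

lemma flp_mem_V {a : Fin K → ℤ} (ha : a ∈ V K) (F : Finset (Fin K)) : flp a F ∈ V K := by
  rw [mem_V_iff] at *
  intro i
  by_cases hi : i ∈ F <;> rcases ha i with h | h <;> simp [flp, hi, h]

lemma flp_sub (a : Fin K → ℤ) (F : Finset (Fin K)) (i : Fin K) :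
    flp a F i - a i = if i ∈ F then -2 * a i else 0 := by
  unfold flp
  split_ifs <;> ring

lemma diff_flp {a : Fin K → ℤ} (ha : a ∈ V K) (F : Finset (Fin K)) :
    (Finset.univ.filter fun i => flp a F i ≠ a i) = F := by
  ext i
  simp only [Finset.mem_filter, Finset.mem_univ, true_and, flp]
  by_cases hi : i ∈ F
  · simp only [hi, if_true, iff_true]
    have := nz_of_mem ha i
    grind
  · simp [hi]

lemma filter_lt_flp (a : Fin K → ℤ) (ha : a ∈ V K) (F : Finset (Fin K)) (i : Fin K) :
    (Finset.univ.filter fun j : Fin K => j < i ∧ flp a F j - a j ≠ 0) = F.filter (· < i) := by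
  ext j
  simp only [Finset.mem_filter, Finset.mem_univ, true_and, flp_sub]
  by_cases hj : j ∈ F
  · have h2 : -2 * a j ≠ 0 := by have := nz_of_mem ha j; omega
    simp only [hj, if_true]
    tauto
  · simp [hj]

lemma altNeg_flp {a : Fin K → ℤ} (ha : a ∈ V K) (F : Finset (Fin K)) :
    AltNeg K a (flp a F) ↔ altC a 1 F := by
  have hnz := nz_of_mem ha
  unfold AltNeg altC
  constructor
  · intro h i hi
    have hd : flp a F i - a i ≠ 0 := by
      rw [flp_sub, if_pos hi]
      have := hnz i; omega
    have h2 := h i hd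
    rw [flp_sub, if_pos hi, filter_lt_flp a ha F i] at h2
    rw [show #(Finset.filter (fun x => x < i) F) = rk F i from rfl] at h2
    have h3 : -2 * a i = -2 * (-1 : ℤ) ^ (rk F i) := by
      rw [h2, pow_succ]; ring
    have h4 := mul_left_cancel₀ (by norm_num : (-2 : ℤ) ≠ 0) h3
    rw [h4]; ring
  · intro h i hd
    have hi : i ∈ F := by
      by_contra hc
      rw [flp_sub, if_neg hc] at hd
      exact hd rfl
    rw [flp_sub, if_pos hi, filter_lt_flp a ha F i]
    have h2 := h i hi
    have : (F.filter (· < i)).card = rk F i := rfl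
    rw [this, h2, pow_succ]
    ring

lemma altPos_flp {a : Fin K → ℤ} (ha : a ∈ V K) (F : Finset (Fin K)) :
    AltPos K a (flp a F) ↔ altC a (-1) F := by
  have hnz := nz_of_mem ha
  unfold AltPos altC
  constructor
  · intro h i hi
    have hd : flp a F i - a i ≠ 0 := by
      rw [flp_sub, if_pos hi]
      have := hnz i; omega
    have h2 := h i hd
    rw [flp_sub, if_pos hi, filter_lt_flp a ha F i] at h2
    rw [show #(Finset.filter (fun x => x < i) F) = rk F i from rfl] at h2
    have h3 : -2 * a i = -2 * (-(-1 : ℤ) ^ (rk F i)) := by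
      rw [h2]; ring
    have h4 := mul_left_cancel₀ (by norm_num : (-2 : ℤ) ≠ 0) h3
    rw [h4]; ring
  · intro h i hd
    have hi : i ∈ F := by
      by_contra hc
      rw [flp_sub, if_neg hc] at hd
      exact hd rfl
    rw [flp_sub, if_pos hi, filter_lt_flp a ha F i]
    have h2 := h i hi
    have : (F.filter (· < i)).card = rk F i := rfl
    rw [this, h2]
    ring

lemma flp_eq_self_iff {a : Fin K → ℤ} (ha : a ∈ V K) (F : Finset (Fin K)) :
    a = flp a F ↔ F = ∅ := by
  constructor
  · intro h
    by_contra hne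
    obtain ⟨i, hi⟩ := Finset.nonempty_iff_ne_empty.mpr hne
    have h2 := congrFun h i
    rw [flp, if_pos hi] at h2
    have := nz_of_mem ha i
    omega
  · rintro rfl
    funext i
    simp [flp]

lemma flp_mem_Eplus {a : Fin K → ℤ} (ha : a ∈ V K) (F : Finset (Fin K)) :
    (a, flp a F) ∈ Eplus K ↔ altC a 1 F := by
  unfold Eplus
  rw [Finset.mem_filter, Finset.mem_product]
  constructor
  · rintro ⟨_, (heq | halt)⟩
    · have hF : F = ∅ := (flp_eq_self_iff ha F).mp heq
      subst hF
      intro i hi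
      exact absurd hi (Finset.notMem_empty i)
    · exact (altNeg_flp ha F).mp halt
  · intro h
    exact ⟨⟨ha, flp_mem_V ha F⟩, Or.inr ((altNeg_flp ha F).mpr h)⟩

lemma flp_mem_Eminus {a : Fin K → ℤ} (ha : a ∈ V K) (F : Finset (Fin K)) :
    (a, flp a F) ∈ Eminus K ↔ altC a (-1) F := by
  unfold Eminus
  rw [Finset.mem_filter, Finset.mem_product]
  constructor
  · rintro ⟨_, (heq | halt)⟩
    · have hF : F = ∅ := (flp_eq_self_iff ha F).mp heq
      subst hF
      intro i hi
      exact absurd hi (Finset.notMem_empty i)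
    · exact (altPos_flp ha F).mp halt
  · intro h
    exact ⟨⟨ha, flp_mem_V ha F⟩, Or.inr ((altPos_flp ha F).mpr h)⟩

lemma eq_flp_of_mem {a b : Fin K → ℤ} (ha : a ∈ V K) (hb : b ∈ V K) :
    b = flp a (Finset.univ.filter fun i => b i ≠ a i) := by
  funext i
  unfold flp
  by_cases h : b i = a i
  · rw [if_neg (by simp [h])]
    exact h
  · rw [if_pos (by simp [h])]
    rcases pm_of_mem ha i with h1 | h1 <;> rcases pm_of_mem hb i with h2 | h2 <;> omega

lemma sum_plus {a : Fin K → ℤ} (ha : a ∈ V K) (h : (Fin K → ℤ) → ℝ) :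
    ∑ b ∈ (V K).filter (fun b => (a, b) ∈ Eplus K), h b
      = ∑ F ∈ Finset.univ.filter (fun F : Finset (Fin K) => altC a 1 F), h (flp a F) := by
  apply Finset.sum_nbij' (i := fun b => Finset.univ.filter fun i => b i ≠ a i) (j := flp a)
  · intro b hb
    rw [Finset.mem_filter] at hb
    obtain ⟨hbV, hbE⟩ := hb
    rw [Finset.mem_filter]
    refine ⟨Finset.mem_univ _, ?_⟩
    rw [eq_flp_of_mem ha hbV] at hbE
    exact (flp_mem_Eplus ha _).mp hbE
  · intro F hF
    rw [Finset.mem_filter] at hF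
    rw [Finset.mem_filter]
    exact ⟨flp_mem_V ha F, (flp_mem_Eplus ha F).mpr hF.2⟩
  · intro b hb
    rw [Finset.mem_filter] at hb
    exact (eq_flp_of_mem ha hb.1).symm
  · intro F _
    exact diff_flp ha F
  · intro b hb
    rw [Finset.mem_filter] at hb
    exact congrArg h (eq_flp_of_mem ha hb.1)

lemma sum_minus {a : Fin K → ℤ} (ha : a ∈ V K) (h : (Fin K → ℤ) → ℝ) :
    ∑ b ∈ (V K).filter (fun b => (a, b) ∈ Eminus K), h b
      = ∑ F ∈ Finset.univ.filter (fun F : Finset (Fin K) => altC a (-1) F), h (flp a F) := by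
  apply Finset.sum_nbij' (i := fun b => Finset.univ.filter fun i => b i ≠ a i) (j := flp a)
  · intro b hb
    rw [Finset.mem_filter] at hb
    obtain ⟨hbV, hbE⟩ := hb
    rw [Finset.mem_filter]
    refine ⟨Finset.mem_univ _, ?_⟩
    rw [eq_flp_of_mem ha hbV] at hbE
    exact (flp_mem_Eminus ha _).mp hbE
  · intro F hF
    rw [Finset.mem_filter] at hF
    rw [Finset.mem_filter]
    exact ⟨flp_mem_V ha F, (flp_mem_Eminus ha F).mpr hF.2⟩
  · intro b hb
    rw [Finset.mem_filter] at hb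
    exact (eq_flp_of_mem ha hb.1).symm
  · intro F _
    exact diff_flp ha F
  · intro b hb
    rw [Finset.mem_filter] at hb
    exact congrArg h (eq_flp_of_mem ha hb.1)

lemma count_plus {a : Fin K → ℤ} (ha : a ∈ V K) (k : ℕ) :
    alphaK K k a
      = (Finset.univ.filter fun F : Finset (Fin K) => altC a 1 F ∧ F.card = k).card := by
  unfold alphaK
  apply Finset.card_nbij' (i := fun b => Finset.univ.filter fun i => b i ≠ a i) (j := flp a)
  · intro b hb
    rw [Finset.mem_coe, Finset.mem_filter] at hb
    obtain ⟨hbV, hbE, hbc⟩ := hb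
    rw [Finset.mem_coe, Finset.mem_filter]
    refine ⟨Finset.mem_univ _, ?_, hbc⟩
    rw [eq_flp_of_mem ha hbV] at hbE
    exact (flp_mem_Eplus ha _).mp hbE
  · intro F hF
    rw [Finset.mem_coe, Finset.mem_filter] at hF
    rw [Finset.mem_coe, Finset.mem_filter]
    refine ⟨flp_mem_V ha F, (flp_mem_Eplus ha F).mpr hF.2.1, ?_⟩
    rw [diff_flp ha F]
    exact hF.2.2
  · intro b hb
    rw [Finset.mem_coe, Finset.mem_filter] at hb
    exact (eq_flp_of_mem ha hb.1).symm
  · intro F _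
    exact diff_flp ha F

lemma count_minus {a : Fin K → ℤ} (ha : a ∈ V K) (k : ℕ) :
    abarK K k a
      = (Finset.univ.filter fun F : Finset (Fin K) => altC a (-1) F ∧ F.card = k).card := by
  unfold abarK
  apply Finset.card_nbij' (i := fun b => Finset.univ.filter fun i => b i ≠ a i) (j := flp a)
  · intro b hb
    rw [Finset.mem_coe, Finset.mem_filter] at hb
    obtain ⟨hbV, hbE, hbc⟩ := hb
    rw [Finset.mem_coe, Finset.mem_filter]
    refine ⟨Finset.mem_univ _, ?_, hbc⟩
    rw [eq_flp_of_mem ha hbV] at hbE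
    exact (flp_mem_Eminus ha _).mp hbE
  · intro F hF
    rw [Finset.mem_coe, Finset.mem_filter] at hF
    rw [Finset.mem_coe, Finset.mem_filter]
    refine ⟨flp_mem_V ha F, (flp_mem_Eminus ha F).mpr hF.2.1, ?_⟩
    rw [diff_flp ha F]
    exact hF.2.2
  · intro b hb
    rw [Finset.mem_coe, Finset.mem_filter] at hb
    exact (eq_flp_of_mem ha hb.1).symm
  · intro F _
    exact diff_flp ha F

lemma delta_f1 {a : Fin K → ℤ} (ha : a ∈ V K) (F : Finset (Fin K)) (s : ℤ) (hF : altC a s F) :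
    f1 K (flp a F) - f1 K a = -2 * s * eI F.card := by
  unfold f1
  rw [← Finset.sum_sub_distrib]
  have h1 : ∀ i : Fin K, flp a F i - a i = if i ∈ F then -2 * a i else 0 := flp_sub a F
  rw [Finset.sum_congr rfl (fun i _ => h1 i), Finset.sum_ite_mem, Finset.univ_inter]
  have h2 : ∀ i ∈ F, -2 * a i = (-2 * s) * (-1 : ℤ) ^ (rk F i) := by
    intro i hi
    rw [hF i hi]
    ring
  rw [Finset.sum_congr rfl h2, ← Finset.mul_sum, sum_rk_neg_one]

def P2 (a : Fin K → ℤ) (s : ℤ) : Finset (Fin K × Fin K) :=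
  (Finset.univ ×ˢ Finset.univ).filter fun p => p.1 < p.2 ∧ a p.1 = s ∧ a p.2 = -s

lemma rk_pair_left {i j : Fin K} (hij : i < j) : rk ({i, j} : Finset (Fin K)) i = 0 := by
  unfold rk
  rw [Finset.card_eq_zero, Finset.filter_eq_empty_iff]
  intro x hx
  rcases Finset.mem_insert.mp hx with rfl | hx
  · exact lt_irrefl x
  · rw [Finset.mem_singleton] at hx
    subst hx
    exact fun h => absurd h (not_lt.mpr hij.le)

lemma rk_pair_right {i j : Fin K} (hij : i < j) : rk ({i, j} : Finset (Fin K)) j = 1 := by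
  unfold rk
  have h : ({i, j} : Finset (Fin K)).filter (· < j) = {i} := by
    ext x
    simp only [Finset.mem_filter, Finset.mem_insert, Finset.mem_singleton]
    constructor
    · rintro ⟨rfl | rfl, hlt⟩
      · rfl
      · exact absurd hlt (lt_irrefl _)
    · rintro rfl
      exact ⟨Or.inl rfl, hij⟩
  rw [h, Finset.card_singleton]

lemma altC_pair {a : Fin K → ℤ} {i j : Fin K} (hij : i < j) (s : ℤ) :
    altC a s {i, j} ↔ (a i = s ∧ a j = -s) := by
  unfold altC
  constructor
  · intro h
    have h1 := h i (Finset.mem_insert_self i {j})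
    have h2 := h j (Finset.mem_insert_of_mem (Finset.mem_singleton_self j))
    rw [rk_pair_left hij] at h1
    rw [rk_pair_right hij] at h2
    exact ⟨by rw [h1]; norm_num, by rw [h2]; ring⟩
  · rintro ⟨h1, h2⟩ x hx
    rcases Finset.mem_insert.mp hx with rfl | hx
    · rw [rk_pair_left hij, h1]; norm_num
    · rw [Finset.mem_singleton] at hx
      subst hx
      rw [rk_pair_right hij, h2]; ring

lemma two_count (a : Fin K → ℤ) (s : ℤ) :
    (P2 a s).card
      = (Finset.univ.filter fun F : Finset (Fin K) => altC a s F ∧ F.card = 2).card := by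
  apply Finset.card_bij (i := fun p _ => ({p.1, p.2} : Finset (Fin K)))
  · intro p hp
    unfold P2 at hp
    rw [Finset.mem_filter] at hp
    obtain ⟨-, hlt, h1, h2⟩ := hp
    rw [Finset.mem_filter]
    exact ⟨Finset.mem_univ _, (altC_pair hlt s).mpr ⟨h1, h2⟩, Finset.card_pair (ne_of_lt hlt)⟩
  · intro p hp q hq h
    unfold P2 at hp hq
    rw [Finset.mem_filter] at hp hq
    obtain ⟨-, hltp, -, -⟩ := hp
    obtain ⟨-, hltq, -, -⟩ := hq
    have hmem : p.1 ∈ ({q.1, q.2} : Finset (Fin K)) := by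
      rw [← h]; exact Finset.mem_insert_self _ _
    have hmem2 : p.2 ∈ ({q.1, q.2} : Finset (Fin K)) := by
      rw [← h]; exact Finset.mem_insert_of_mem (Finset.mem_singleton_self _)
    have hmem3 : q.1 ∈ ({p.1, p.2} : Finset (Fin K)) := by
      rw [h]; exact Finset.mem_insert_self _ _
    simp only [Finset.mem_insert, Finset.mem_singleton] at hmem hmem2 hmem3
    have hp1 : p.1 = q.1 := by
      rcases hmem with h1 | h1
      · exact h1
      · rcases hmem3 with h3 | h3
        · exact h3.symm
        · exfalso
          rw [h3] at hltq
          rw [← h1] at hltq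
          exact absurd hltp (lt_asymm hltq)
    have hp2 : p.2 = q.2 := by
      rcases hmem2 with h2 | h2
      · exfalso
        have h4 : p.1 = p.2 := hp1.trans h2.symm
        rw [h4] at hltp
        exact lt_irrefl _ hltp
      · exact h2
    exact Prod.ext hp1 hp2
  · intro F hF
    rw [Finset.mem_filter] at hF
    obtain ⟨-, halt, hcard⟩ := hF
    obtain ⟨x, y, hxy, rfl⟩ := Finset.card_eq_two.mp hcard
    rcases lt_or_gt_of_ne hxy with hlt | hgt
    · obtain ⟨h1, h2⟩ := (altC_pair hlt s).mp halt
      refine ⟨(x, y), ?_, rfl⟩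
      unfold P2
      rw [Finset.mem_filter]
      exact ⟨Finset.mem_product.mpr ⟨Finset.mem_univ _, Finset.mem_univ _⟩, hlt, h1, h2⟩
    · have hcomm : ({x, y} : Finset (Fin K)) = {y, x} := Finset.pair_comm x y
      rw [hcomm] at halt
      obtain ⟨h1, h2⟩ := (altC_pair hgt s).mp halt
      refine ⟨(y, x), ?_, hcomm.symm⟩
      unfold P2
      rw [Finset.mem_filter]
      exact ⟨Finset.mem_product.mpr ⟨Finset.mem_univ _, Finset.mem_univ _⟩, hgt, h1, h2⟩

lemma card_P2_sub {a : Fin K → ℤ} (ha : a ∈ V K) :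
    2 * (((P2 a 1).card : ℤ) - ((P2 a (-1)).card : ℤ))
      = ∑ p ∈ (Finset.univ ×ˢ Finset.univ).filter (fun p : Fin K × Fin K => p.1 < p.2),
          (a p.1 - a p.2) := by
  have e : ∀ s : ℤ, ((P2 a s).card : ℤ)
      = ∑ p ∈ (Finset.univ ×ˢ Finset.univ).filter (fun p : Fin K × Fin K => p.1 < p.2),
          (if a p.1 = s ∧ a p.2 = -s then (1 : ℤ) else 0) := by
    intro s
    have hset : P2 a s
        = ((Finset.univ ×ˢ Finset.univ).filter (fun p : Fin K × Fin K => p.1 < p.2)).filter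
            (fun p => a p.1 = s ∧ a p.2 = -s) := by
      unfold P2
      ext p
      simp only [Finset.mem_filter, and_assoc]
    rw [hset, Finset.card_filter, Nat.cast_sum]
    apply Finset.sum_congr rfl
    intro p _
    split_ifs <;> simp
  rw [e 1, e (-1), ← Finset.sum_sub_distrib, Finset.mul_sum]
  apply Finset.sum_congr rfl
  intro p _
  rcases pm_of_mem ha p.1 with h1 | h1 <;> rcases pm_of_mem ha p.2 with h2 | h2 <;>
    simp [h1, h2] <;> norm_num

lemma sum_T (a : Fin K → ℤ) :
    ∑ p ∈ (Finset.univ ×ˢ Finset.univ).filter (fun p : Fin K × Fin K => p.1 < p.2),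
        (a p.1 - a p.2)
      = ∑ i : Fin K, ((K : ℤ) - 1 - 2 * (i : ℤ)) * a i := by
  rw [Finset.sum_filter, Finset.sum_product]
  have h1 : ∀ i : Fin K, (∑ j : Fin K, if i < j then a i - a j else 0)
      = (∑ j : Fin K, if i < j then a i else 0) - ∑ j : Fin K, if i < j then a j else 0 := by
    intro i
    rw [← Finset.sum_sub_distrib]
    apply Finset.sum_congr rfl
    intro j _
    split_ifs <;> ring
  rw [Finset.sum_congr rfl (fun i _ => h1 i), Finset.sum_sub_distrib]
  have h2 : ∀ i : Fin K, (∑ j : Fin K, if i < j then a i else 0)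
      = ((K : ℤ) - 1 - (i : ℤ)) * a i := by
    intro i
    rw [Finset.sum_ite, Finset.sum_const, Finset.sum_const_zero, add_zero]
    have hf : Finset.univ.filter (fun j => i < j) = Finset.Ioi i := by
      ext j; simp
    rw [hf, Fin.card_Ioi]
    have hc : ((K - 1 - (i : ℕ) : ℕ) : ℤ) = (K : ℤ) - 1 - (i : ℤ) := by
      have := i.isLt
      omega
    rw [nsmul_eq_mul, hc]
  have h3 : (∑ i : Fin K, ∑ j : Fin K, if i < j then a j else 0)
      = ∑ j : Fin K, (j : ℤ) * a j := by
    rw [Finset.sum_comm]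
    apply Finset.sum_congr rfl
    intro j _
    rw [Finset.sum_ite, Finset.sum_const, Finset.sum_const_zero, add_zero]
    have hf : Finset.univ.filter (fun i => i < j) = Finset.Iio j := by
      ext i; simp
    rw [hf, Fin.card_Iio, nsmul_eq_mul]
  rw [Finset.sum_congr rfl (fun i _ => h2 i), h3, ← Finset.sum_sub_distrib]
  apply Finset.sum_congr rfl
  intro i _
  ring

lemma f2_lin {a : Fin K → ℤ} (ha : a ∈ V K) :
    2 * f2 K a = ∑ i : Fin K, ((K : ℤ) - 1 - 2 * (i : ℤ)) * a i := by
  unfold f2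
  rw [count_plus ha 2, count_minus ha 2, ← two_count a 1, ← two_count a (-1)]
  rw [card_P2_sub ha, sum_T a]

lemma delta_f2 {a : Fin K → ℤ} (ha : a ∈ V K) (F : Finset (Fin K)) (s : ℤ) (hF : altC a s F) :
    f2 K (flp a F) - f2 K a = -s * (((K : ℤ) - 1) * eI F.card - 2 * sg F) := by
  have h1 := f2_lin ha
  have h2 := f2_lin (flp_mem_V ha F)
  have h3 : 2 * (f2 K (flp a F) - f2 K a)
      = ∑ i : Fin K, ((K : ℤ) - 1 - 2 * (i : ℤ)) * (flp a F i - a i) := by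
    rw [mul_sub, h1, h2, ← Finset.sum_sub_distrib]
    apply Finset.sum_congr rfl
    intro i _
    ring
  have h4 : (∑ i : Fin K, ((K : ℤ) - 1 - 2 * (i : ℤ)) * (flp a F i - a i))
      = ∑ i ∈ F, ((K : ℤ) - 1 - 2 * (i : ℤ)) * (-2 * a i) := by
    have hh : ∀ i : Fin K, ((K : ℤ) - 1 - 2 * (i : ℤ)) * (flp a F i - a i)
        = if i ∈ F then ((K : ℤ) - 1 - 2 * (i : ℤ)) * (-2 * a i) else 0 := by
      intro i
      rw [flp_sub]
      split_ifs <;> ring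
    rw [Finset.sum_congr rfl (fun i _ => hh i), Finset.sum_ite_mem, Finset.univ_inter]
  have h5 : (∑ i ∈ F, ((K : ℤ) - 1 - 2 * (i : ℤ)) * (-2 * a i))
      = -2 * s * (((K : ℤ) - 1) * eI F.card - 2 * sg F) := by
    have hh : ∀ i ∈ F, ((K : ℤ) - 1 - 2 * (i : ℤ)) * (-2 * a i)
        = (-2 * s) * (((K : ℤ) - 1) * (-1 : ℤ) ^ (rk F i) - 2 * ((-1 : ℤ) ^ (rk F i) * (i : ℤ))) := by
      intro i hi
      rw [hF i hi]
      ring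
    rw [Finset.sum_congr rfl hh, ← Finset.mul_sum]
    congr 1
    rw [Finset.sum_sub_distrib, ← Finset.mul_sum, ← Finset.mul_sum, sum_rk_neg_one]
    unfold sg
    rfl
  have h6 := h3.trans (h4.trans h5)
  linarith

lemma cO_filter (a : Fin K → ℤ) (s : ℤ) :
    ∑ F ∈ Finset.univ.filter (fun F : Finset (Fin K) => altC a s F), eI F.card = cO a s := by
  rw [Finset.sum_filter, cO_eq_sum_eI]

lemma LL_filter (a : Fin K → ℤ) (s : ℤ) :
    ∑ F ∈ Finset.univ.filter (fun F : Finset (Fin K) => altC a s F), sg F = LL a s := by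
  rw [Finset.sum_filter]
  rfl

lemma count_filter (a : Fin K → ℤ) (s : ℤ) :
    ∑ F ∈ Finset.univ.filter (fun F : Finset (Fin K) => altC a s F), (1 : ℤ)
      = cO a s + cE a s := by
  rw [Finset.sum_filter]
  unfold cO cE
  rw [← Finset.sum_add_distrib]
  apply Finset.sum_congr rfl
  intro F _
  by_cases h : altC a s F
  · rcases Nat.even_or_odd F.card with he | ho
    · simp [h, he, Nat.not_odd_iff_even.mpr he]
    · simp [h, ho, Nat.not_even_iff_odd.mpr ho]
  · simp [h]

lemma divE_split (K : ℕ) (S : Edge K → ℝ) (a : Fin K → ℤ) :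
    divE K S a = (∑ b ∈ (V K).filter (fun b => (a, b) ∈ Eplus K), S (true, (a, b)))
      + ∑ b ∈ (V K).filter (fun b => (a, b) ∈ Eminus K), S (false, (a, b)) := by
  unfold divE EK
  rw [Finset.filter_union]
  rw [Finset.sum_union (by
    rw [Finset.disjoint_left]
    intro e he1 he2
    rw [Finset.mem_filter, Finset.mem_image] at he1 he2
    obtain ⟨⟨p, _, rfl⟩, -⟩ := he1
    obtain ⟨⟨q, _, heq⟩, -⟩ := he2
    exact Bool.noConfusion (congrArg Prod.fst heq))]
  congr 1
  · rw [Finset.filter_image,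
      Finset.sum_image (by intro x _ y _ hxy; simpa using hxy)]
    have hfib : (Eplus K).filter (fun p => ((true, p) : Edge K).2.1 = a)
        = ((V K).filter (fun b => (a, b) ∈ Eplus K)).image (fun b => (a, b)) := by
      ext p
      obtain ⟨x, y⟩ := p
      simp only [Finset.mem_filter, Finset.mem_image]
      constructor
      · rintro ⟨hp, hx⟩
        have hx' : x = a := hx
        subst hx'
        have hVV := (Finset.mem_filter.mp hp).1
        exact ⟨y, ⟨(Finset.mem_product.mp hVV).2, hp⟩, rfl⟩
      · rintro ⟨b, ⟨hbV, hbE⟩, heq⟩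
        rw [Prod.mk.injEq] at heq
        obtain ⟨h1, h2⟩ := heq
        subst h1
        subst h2
        exact ⟨hbE, rfl⟩
    rw [hfib, Finset.sum_image (by intro x _ y _ hxy; simpa using hxy)]
  · rw [Finset.filter_image,
      Finset.sum_image (by intro x _ y _ hxy; simpa using hxy)]
    have hfib : (Eminus K).filter (fun p => ((false, p) : Edge K).2.1 = a)
        = ((V K).filter (fun b => (a, b) ∈ Eminus K)).image (fun b => (a, b)) := by
      ext p
      obtain ⟨x, y⟩ := p
      simp only [Finset.mem_filter, Finset.mem_image]
      constructor
      · rintro ⟨hp, hx⟩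
        have hx' : x = a := hx
        subst hx'
        have hVV := (Finset.mem_filter.mp hp).1
        exact ⟨y, ⟨(Finset.mem_product.mp hVV).2, hp⟩, rfl⟩
      · rintro ⟨b, ⟨hbV, hbE⟩, heq⟩
        rw [Prod.mk.injEq] at heq
        obtain ⟨h1, h2⟩ := heq
        subst h1
        subst h2
        exact ⟨hbE, rfl⟩
    rw [hfib, Finset.sum_image (by intro x _ y _ hxy; simpa using hxy)]

end Bridge

end CRWAux

/-- With `f = -((1/2)f₁ + (1/(K+2))f₂) + K/2`, the field `A - ∇f` is divergence-free:
at every vertex, `Σ_{(a,b) ∈ E_K} A(a,b) = Σ_{(a,b) ∈ E_K} (f(b) - f(a))`. -/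
theorem statement17 (K : ℕ) (hK : 1 ≤ K) :
    let f : (Fin K → ℤ) → ℝ := fun a : Fin K → ℤ =>
      -((1 / 2) * (CRW.f1 K a : ℝ) + (1 / ((K : ℝ) + 2)) * (CRW.f2 K a : ℝ))
        + (K : ℝ) / 2
    ∀ a ∈ CRW.V K, CRW.divE K (CRW.A K) a = CRW.divE K (CRW.gradE K f) a := by
  intro f a haV
  have hf : ∀ x : Fin K → ℤ,
      f x = -((1 / 2) * ((CRW.f1 K x : ℤ) : ℝ) + (1 / ((K : ℝ) + 2)) * ((CRW.f2 K x : ℤ) : ℝ))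
        + (K : ℝ) / 2 := fun x => rfl
  have hpm := CRWAux.pm_of_mem haV
  have hK2 : ((K : ℝ) + 2) ≠ 0 := by positivity
  -- counts
  have hcount : ∀ s : ℤ,
      ∑ F ∈ Finset.univ.filter (fun F : Finset (Fin K) => CRWAux.altC a s F), (1 : ℝ)
        = ((CRWAux.cO a s + CRWAux.cE a s : ℤ) : ℝ) := by
    intro s
    have h1 := CRWAux.count_filter a s
    rw [← h1, Int.cast_sum]
    norm_num
  -- LHS
  have eL : CRW.divE K (CRW.A K) a
      = ((CRWAux.cO a 1 + CRWAux.cE a 1 : ℤ) : ℝ)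
        - ((CRWAux.cO a (-1) + CRWAux.cE a (-1) : ℤ) : ℝ) := by
    rw [CRWAux.divE_split K (CRW.A K) a]
    have t1 : ∑ b ∈ (CRW.V K).filter (fun b => (a, b) ∈ CRW.Eplus K), CRW.A K (true, (a, b))
        = ∑ F ∈ Finset.univ.filter (fun F : Finset (Fin K) => CRWAux.altC a 1 F), (1 : ℝ) := by
      rw [CRWAux.sum_plus haV (fun b => CRW.A K (true, (a, b)))]
      apply Finset.sum_congr rfl
      intro F _
      simp [CRW.A]
    have t2 : ∑ b ∈ (CRW.V K).filter (fun b => (a, b) ∈ CRW.Eminus K), CRW.A K (false, (a, b))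
        = ∑ F ∈ Finset.univ.filter (fun F : Finset (Fin K) => CRWAux.altC a (-1) F),
            (-1 : ℝ) := by
      rw [CRWAux.sum_minus haV (fun b => CRW.A K (false, (a, b)))]
      apply Finset.sum_congr rfl
      intro F _
      simp [CRW.A]
    rw [t1, t2]
    have t3 : ∑ F ∈ Finset.univ.filter (fun F : Finset (Fin K) => CRWAux.altC a (-1) F),
        (-1 : ℝ) = -∑ F ∈ Finset.univ.filter (fun F : Finset (Fin K) => CRWAux.altC a (-1) F),
        (1 : ℝ) := by
      rw [← Finset.sum_neg_distrib]
    rw [t3, hcount 1, hcount (-1)]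
    ring
  -- RHS per-term values
  have hterm1 : ∀ F ∈ Finset.univ.filter (fun F : Finset (Fin K) => CRWAux.altC a 1 F),
      f (CRWAux.flp a F) - f a
        = (((((K : ℤ) + 2) + ((K : ℤ) - 1)) * CRWAux.eI F.card - 2 * CRWAux.sg F : ℤ) : ℝ)
            / ((K : ℝ) + 2) := by
    intro F hF
    have halt : CRWAux.altC a 1 F := (Finset.mem_filter.mp hF).2
    have d1 : CRW.f1 K (CRWAux.flp a F) - CRW.f1 K a = -2 * CRWAux.eI F.card := by
      have := CRWAux.delta_f1 haV F 1 halt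
      linarith
    have d2 : CRW.f2 K (CRWAux.flp a F) - CRW.f2 K a
        = -(((K : ℤ) - 1) * CRWAux.eI F.card - 2 * CRWAux.sg F) := by
      have := CRWAux.delta_f2 haV F 1 halt
      linarith
    have r1 : ((CRW.f1 K (CRWAux.flp a F) : ℤ) : ℝ) - ((CRW.f1 K a : ℤ) : ℝ)
        = -2 * ((CRWAux.eI F.card : ℤ) : ℝ) := by exact_mod_cast congrArg (Int.cast : ℤ → ℝ) d1
    have r2 : ((CRW.f2 K (CRWAux.flp a F) : ℤ) : ℝ) - ((CRW.f2 K a : ℤ) : ℝ)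
        = -(((K : ℝ) - 1) * ((CRWAux.eI F.card : ℤ) : ℝ) - 2 * ((CRWAux.sg F : ℤ) : ℝ)) := by
      have := congrArg (Int.cast : ℤ → ℝ) d2
      push_cast at this ⊢
      linarith
    rw [hf (CRWAux.flp a F), hf a]
    push_cast
    push_cast at r1 r2
    have hinv := mul_inv_cancel₀ hK2
    linear_combination (-1 / 2 : ℝ) * r1 - (1 / ((K : ℝ) + 2)) * r2 - ((CRWAux.eI F.card : ℤ) : ℝ) * hinv
  have hterm2 : ∀ F ∈ Finset.univ.filter (fun F : Finset (Fin K) => CRWAux.altC a (-1) F),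
      f (CRWAux.flp a F) - f a
        = ((-((((K : ℤ) + 2) + ((K : ℤ) - 1)) * CRWAux.eI F.card - 2 * CRWAux.sg F) : ℤ) : ℝ)
            / ((K : ℝ) + 2) := by
    intro F hF
    have halt : CRWAux.altC a (-1) F := (Finset.mem_filter.mp hF).2
    have d1 : CRW.f1 K (CRWAux.flp a F) - CRW.f1 K a = 2 * CRWAux.eI F.card := by
      have := CRWAux.delta_f1 haV F (-1) halt
      linarith
    have d2 : CRW.f2 K (CRWAux.flp a F) - CRW.f2 K a
        = ((K : ℤ) - 1) * CRWAux.eI F.card - 2 * CRWAux.sg F := by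
      have := CRWAux.delta_f2 haV F (-1) halt
      linarith
    have r1 : ((CRW.f1 K (CRWAux.flp a F) : ℤ) : ℝ) - ((CRW.f1 K a : ℤ) : ℝ)
        = 2 * ((CRWAux.eI F.card : ℤ) : ℝ) := by exact_mod_cast congrArg (Int.cast : ℤ → ℝ) d1
    have r2 : ((CRW.f2 K (CRWAux.flp a F) : ℤ) : ℝ) - ((CRW.f2 K a : ℤ) : ℝ)
        = ((K : ℝ) - 1) * ((CRWAux.eI F.card : ℤ) : ℝ) - 2 * ((CRWAux.sg F : ℤ) : ℝ) := by
      have := congrArg (Int.cast : ℤ → ℝ) d2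
      push_cast at this ⊢
      linarith
    rw [hf (CRWAux.flp a F), hf a]
    push_cast
    push_cast at r1 r2
    have hinv := mul_inv_cancel₀ hK2
    linear_combination (-1 / 2 : ℝ) * r1 - (1 / ((K : ℝ) + 2)) * r2 + ((CRWAux.eI F.card : ℤ) : ℝ) * hinv
  -- RHS
  have eR : CRW.divE K (CRW.gradE K f) a
      = (((((K : ℤ) + 2) + ((K : ℤ) - 1)) * CRWAux.cO a 1 - 2 * CRWAux.LL a 1 : ℤ) : ℝ)
            / ((K : ℝ) + 2)
        + ((-((((K : ℤ) + 2) + ((K : ℤ) - 1)) * CRWAux.cO a (-1) - 2 * CRWAux.LL a (-1)) :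
            ℤ) : ℝ) / ((K : ℝ) + 2) := by
    rw [CRWAux.divE_split K (CRW.gradE K f) a]
    have t1 : ∑ b ∈ (CRW.V K).filter (fun b => (a, b) ∈ CRW.Eplus K),
        CRW.gradE K f (true, (a, b))
        = ∑ F ∈ Finset.univ.filter (fun F : Finset (Fin K) => CRWAux.altC a 1 F),
            (f (CRWAux.flp a F) - f a) := by
      rw [CRWAux.sum_plus haV (fun b => CRW.gradE K f (true, (a, b)))]
      apply Finset.sum_congr rfl
      intro F _
      simp [CRW.gradE]
    have t2 : ∑ b ∈ (CRW.V K).filter (fun b => (a, b) ∈ CRW.Eminus K),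
        CRW.gradE K f (false, (a, b))
        = ∑ F ∈ Finset.univ.filter (fun F : Finset (Fin K) => CRWAux.altC a (-1) F),
            (f (CRWAux.flp a F) - f a) := by
      rw [CRWAux.sum_minus haV (fun b => CRW.gradE K f (false, (a, b)))]
      apply Finset.sum_congr rfl
      intro F _
      simp [CRW.gradE]
    rw [t1, t2, Finset.sum_congr rfl hterm1, Finset.sum_congr rfl hterm2]
    rw [← Finset.sum_div, ← Finset.sum_div, ← Int.cast_sum, ← Int.cast_sum]
    congr 3
    · rw [Finset.sum_sub_distrib, ← Finset.mul_sum, ← Finset.mul_sum,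
        CRWAux.cO_filter a 1, CRWAux.LL_filter a 1]
    · have hneg : ∀ F ∈ Finset.univ.filter (fun F : Finset (Fin K) => CRWAux.altC a (-1) F),
          (-((((K : ℤ) + 2) + ((K : ℤ) - 1)) * CRWAux.eI F.card - 2 * CRWAux.sg F) : ℤ)
            = 2 * CRWAux.sg F - (((K : ℤ) + 2) + ((K : ℤ) - 1)) * CRWAux.eI F.card := by
        intro F _
        ring
      rw [Finset.sum_congr rfl hneg, Finset.sum_sub_distrib, ← Finset.mul_sum, ← Finset.mul_sum,
        CRWAux.cO_filter a (-1), CRWAux.LL_filter a (-1)]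
      ring
  -- conclude via the key identity
  have hkey := CRWAux.key_identity K a hpm
  have hkeyR : (2 : ℝ) * (((CRWAux.LL a 1 : ℤ) : ℝ) - ((CRWAux.LL a (-1) : ℤ) : ℝ))
      = ((K : ℝ) - 1) * (((CRWAux.cO a 1 : ℤ) : ℝ) - ((CRWAux.cO a (-1) : ℤ) : ℝ))
        - ((K : ℝ) + 2) * (((CRWAux.cE a 1 : ℤ) : ℝ) - ((CRWAux.cE a (-1) : ℤ) : ℝ)) := by
    exact_mod_cast congrArg (Int.cast : ℤ → ℝ) hkey
  rw [eL, eR, ← add_div, ← Int.cast_add]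
  rw [eq_div_iff hK2]
  push_cast
  push_cast at hkeyR
  linear_combination hkeyR
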